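/- Let ψ : Fin M → (Fin d → ℂ) be unit vectors satisfying the 2-design frame identity, and set ν i = (d(d+1) : ℂ) • |ψ i⟩⟨ψ i| − (d : ℂ) • 1. Then: (a) ‖ν i‖ ≤ d² for every i, where ‖·‖ is the ℓ²→ℓ² operator (spectral) norm; (b) for every matrix F with 0 ≤ F ≤ 1 (F positive semidefinite and 1 − F positive semidefinite), ∑_{i=1}^{M} (⟨ψ i, F (ψ i)⟩ / M) • (ν i)² = (d(d−1) : ℂ) • F + (d² : ℂ)·(trace F) • 1; and (c) consequently ‖ ∑_{i=1}^{M} (⟨ψ i, F (ψ i)⟩ / M) • (ν i)² − F² ‖ ≤ d²(d+1). -/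

import Mathlib

open scoped ComplexOrder

noncomputable def specNorm {ι : Type*} [Fintype ι] [DecidableEq ι] (A : Matrix ι ι ℂ) : ℝ :=
  ‖Matrix.toEuclideanCLM (𝕜 := ℂ) A‖

noncomputable def cinner {ι : Type*} [Fintype ι] (u v : ι → ℂ) : ℂ :=
  ∑ x, (starRingEnd ℂ) (u x) * v x

noncomputable def outer {ι : Type*} (u : ι → ℂ) : Matrix ι ι ℂ :=
  Matrix.of fun x y => u x * (starRingEnd ℂ) (u y)

/-!
Each `outer (ψ i)` is an orthogonal projection `P`, so `ν = d(d+1) P - d` is self-adjoint with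
`ν² = d²(d²-1) P + d²`. The C⋆-identity `‖ν‖² = ‖ν²‖` then gives `‖ν‖ ≤ d²`, whereas the triangle
inequality applied to `ν` itself only gives `d² + 2d`. Averaging `ν²` against the weights
`⟨ψ i, F ψ i⟩ / M` only involves `∑ wᵢ Pᵢ`, which the design identity evaluates to
`(F + tr F) / (d(d+1))`; its trace gives `∑ wᵢ = tr F / d`. The last bound is the triangle
inequality together with `‖F‖ ≤ 1` and `0 ≤ tr F ≤ d`, both consequences of `0 ≤ F ≤ 1`.
-/

open Matrix Finset
open scoped Matrix.Norms.L2Operator MatrixOrder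

lemma Complex.norm_natCast_sub_one {n : ℕ} (hn : 1 ≤ n) : ‖(n : ℂ) - 1‖ = n - 1 := by
  rw [show (n : ℂ) - 1 = ((n - 1 : ℝ) : ℂ) by push_cast; rfl]
  exact Complex.norm_of_nonneg (sub_nonneg.mpr (by exact_mod_cast hn))

lemma IsIdempotentElem.smul_sub_smul_one_mul_self {R A : Type*} [CommRing R] [Ring A]
    [Algebra R A] {p : A} (hp : IsIdempotentElem p) (a b : R) :
    (a • p - b • 1) * (a • p - b • 1) = (a ^ 2 - 2 * a * b) • p + b ^ 2 • 1 := by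
  simp only [sub_mul, mul_sub, hp.eq, mul_one, one_mul, smul_mul_assoc, mul_smul_comm]
  module

lemma IsSelfAdjoint.norm_le_of_norm_mul_self_le {A : Type*} [NormedRing A] [StarRing A]
    [CStarRing A] {a : A} (ha : IsSelfAdjoint a) {r : ℝ} (hr : 0 ≤ r) (h : ‖a * a‖ ≤ r ^ 2) :
    ‖a‖ ≤ r :=
  (pow_le_pow_iff_left₀ (norm_nonneg a) hr two_ne_zero).mp (ha.norm_mul_self ▸ h)

lemma IsStarProjection.norm_smul_sub_smul_one_le {A : Type*} [CStarAlgebra A] {p : A}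
    (hp : IsStarProjection p) (n : ℕ) :
    ‖((n : ℂ) * (n + 1)) • p - (n : ℂ) • 1‖ ≤ n ^ 2 := by
  obtain rfl | hn := Nat.eq_zero_or_pos n
  · simp
  have hsa : IsSelfAdjoint (((n : ℂ) * (n + 1)) • p - (n : ℂ) • 1) := by
    simp [IsSelfAdjoint, star_sub, star_smul, hp.isSelfAdjoint.star_eq]
  have hn2 : 1 ≤ n ^ 2 := Nat.one_le_pow _ _ hn
  have hcoef : ((n : ℂ) * (n + 1)) ^ 2 - 2 * ((n : ℂ) * (n + 1)) * n =
      (n : ℂ) ^ 2 * ((n : ℂ) ^ 2 - 1) := by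
    ring
  have hnorm : ‖(n : ℂ) ^ 2 - 1‖ = (n : ℝ) ^ 2 - 1 := by
    exact_mod_cast Complex.norm_natCast_sub_one hn2
  refine hsa.norm_le_of_norm_mul_self_le (by positivity) ?_
  rw [hp.isIdempotentElem.smul_sub_smul_one_mul_self, hcoef]
  calc _ ≤ ‖((n : ℂ) ^ 2 * ((n : ℂ) ^ 2 - 1)) • p‖ + ‖((n : ℂ) ^ 2) • (1 : A)‖ :=
        norm_add_le _ _
    _ = (n : ℝ) ^ 2 * ((n : ℝ) ^ 2 - 1) * ‖p‖ + (n : ℝ) ^ 2 * ‖(1 : A)‖ := by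
        rw [norm_smul, norm_smul, norm_mul, hnorm, norm_pow, Complex.norm_natCast]
    _ ≤ (n : ℝ) ^ 2 * ((n : ℝ) ^ 2 - 1) * 1 + (n : ℝ) ^ 2 * 1 := by
        have : (1 : ℝ) ≤ (n : ℝ) ^ 2 := by exact_mod_cast hn2
        gcongr
        · exact hp.norm_le
        · exact IsStarProjection.norm_le _ (.one A)
    _ = _ := by ring

section
variable {ι : Type*} [Fintype ι] [DecidableEq ι]

lemma Matrix.PosSemidef.norm_le_one {F : Matrix ι ι ℂ} (hF : F.PosSemidef)
    (hF1 : (1 - F).PosSemidef) : ‖F‖ ≤ 1 :=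
  (CStarAlgebra.norm_le_norm_of_nonneg_of_le hF.nonneg (Matrix.le_iff.mpr hF1)).trans
    (IsStarProjection.norm_le _ (.one _))

lemma Matrix.PosSemidef.norm_trace_le_card {F : Matrix ι ι ℂ} (hF : F.PosSemidef)
    (hF1 : (1 - F).PosSemidef) : ‖F.trace‖ ≤ Fintype.card ι := by
  have hle : F.trace ≤ Fintype.card ι := by
    simpa [trace_sub, sub_nonneg] using hF1.trace_nonneg
  simpa using CStarAlgebra.norm_le_norm_of_nonneg_of_le hF.trace_nonneg hle

lemma norm_smul_add_trace_smul_sub_mul_self_le {F : Matrix ι ι ℂ} (hF : F.PosSemidef)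
    (hF1 : (1 - F).PosSemidef) :
    ‖((Fintype.card ι : ℂ) * (Fintype.card ι - 1)) • F + ((Fintype.card ι : ℂ) ^ 2 * F.trace) • 1
      - F * F‖ ≤ (Fintype.card ι : ℝ) ^ 2 * (Fintype.card ι + 1) := by
  cases isEmpty_or_nonempty ι
  · rw [Subsingleton.elim (_ - _) 0, norm_zero]
    positivity
  set n := Fintype.card ι
  have hn : 1 ≤ n := Fintype.card_pos
  have hn' : (1 : ℝ) ≤ n := by exact_mod_cast hn
  have hFn := hF.norm_le_one hF1
  calc _ ≤ ‖((n : ℂ) * (n - 1)) • F‖ + ‖((n : ℂ) ^ 2 * F.trace) • (1 : Matrix ι ι ℂ)‖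
          + ‖F * F‖ :=
        norm_sub_le_of_le (norm_add_le _ _) le_rfl
    _ ≤ n * (n - 1) * 1 + n ^ 2 * n * 1 + 1 := by
        rw [norm_smul, norm_smul, norm_mul, norm_mul, norm_pow, Complex.norm_natCast,
          Complex.norm_natCast_sub_one hn]
        gcongr
        · exact hF.norm_trace_le_card hF1
        · exact IsStarProjection.norm_le _ (.one _)
        · exact (norm_mul_le _ _).trans (mul_le_one₀ hFn (norm_nonneg _) hFn)
    _ ≤ n ^ 2 * (n + 1) := by nlinarith
end

lemma outer_eq_vecMulVec {ι : Type*} (u : ι → ℂ) : outer u = vecMulVec u (star u) := rfl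

section
variable {ι : Type*} [Fintype ι]

lemma cinner_eq_dotProduct (u v : ι → ℂ) : cinner u v = star u ⬝ᵥ v := rfl

lemma trace_outer (u : ι → ℂ) : (outer u).trace = cinner u u := by
  rw [outer_eq_vecMulVec, trace_vecMulVec, dotProduct_comm, cinner_eq_dotProduct]

lemma isStarProjection_outer {u : ι → ℂ} (hu : cinner u u = 1) : IsStarProjection (outer u) where
  isIdempotentElem := by
    rw [IsIdempotentElem, outer_eq_vecMulVec, vecMulVec_mul_vecMulVec, ← cinner_eq_dotProduct,
      hu, one_smul]
  isSelfAdjoint := by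
    rw [IsSelfAdjoint, outer_eq_vecMulVec, star_eq_conjTranspose, conjTranspose_vecMulVec,
      star_star]
end

def IsTwoDesignFrame {d M : ℕ} (ψ : Fin M → Fin d → ℂ) : Prop :=
  ∀ X : Matrix (Fin d) (Fin d) ℂ,
    (1 / (M : ℂ)) • ∑ i, cinner (ψ i) (X *ᵥ ψ i) • outer (ψ i) =
      (1 / ((d : ℂ) * ((d : ℂ) + 1))) • (X + X.trace • (1 : Matrix (Fin d) (Fin d) ℂ))

namespace IsTwoDesignFrame

variable {d M : ℕ} {ψ : Fin M → Fin d → ℂ}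

lemma smul_sum_eq (h : IsTwoDesignFrame ψ) (X : Matrix (Fin d) (Fin d) ℂ) :
    ((d : ℂ) * (d + 1)) • ∑ i, (cinner (ψ i) (X *ᵥ ψ i) / M) • outer (ψ i) = X + X.trace • 1 := by
  obtain rfl | hd := eq_or_ne d 0
  · exact Subsingleton.elim _ _
  have hdd : (d : ℂ) * (d + 1) ≠ 0 := by norm_cast; positivity
  have hsum : ∑ i, (cinner (ψ i) (X *ᵥ ψ i) / M) • outer (ψ i) =
      (1 / (M : ℂ)) • ∑ i, cinner (ψ i) (X *ᵥ ψ i) • outer (ψ i) := by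
    simp_rw [smul_sum, smul_smul, one_div_mul_eq_div]
  rw [hsum, h X, smul_smul, mul_one_div_cancel hdd, one_smul]

lemma mul_sum_eq_trace (h : IsTwoDesignFrame ψ) (hunit : ∀ i, cinner (ψ i) (ψ i) = 1)
    (X : Matrix (Fin d) (Fin d) ℂ) :
    (d : ℂ) * ∑ i, cinner (ψ i) (X *ᵥ ψ i) / M = X.trace := by
  have htr := congrArg trace (h.smul_sum_eq X)
  simp only [trace_smul, trace_sum, trace_outer, hunit, trace_add, trace_one, Fintype.card_fin,
    smul_eq_mul, mul_one] at htr
  have hd1 : (d : ℂ) + 1 ≠ 0 := by norm_cast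
  exact mul_left_cancel₀ hd1 (by linear_combination htr)

lemma sum_smul_sq_eq (h : IsTwoDesignFrame ψ) (hunit : ∀ i, cinner (ψ i) (ψ i) = 1)
    {ν : Fin M → Matrix (Fin d) (Fin d) ℂ}
    (hν : ∀ i, ν i = ((d : ℂ) * ((d : ℂ) + 1)) • outer (ψ i) - (d : ℂ) • 1)
    (F : Matrix (Fin d) (Fin d) ℂ) :
    ∑ i, (cinner (ψ i) (F *ᵥ ψ i) / M) • (ν i * ν i) =
      ((d : ℂ) * ((d : ℂ) - 1)) • F + ((d : ℂ) ^ 2 * F.trace) • 1 := by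
  calc _ = ((d : ℂ) * (d - 1)) • (F + F.trace • 1) + ((d : ℂ) * F.trace) • 1 := by
        rw [← h.smul_sum_eq, ← h.mul_sum_eq_trace hunit, smul_smul, smul_sum, mul_sum, mul_sum,
          sum_smul, ← sum_add_distrib]
        refine sum_congr rfl fun i _ => ?_
        rw [hν, (isStarProjection_outer (hunit i)).isIdempotentElem.smul_sub_smul_one_mul_self]
        module
    _ = _ := by module

end IsTwoDesignFrame

/-- Parameters for the matrix Bernstein inequality using global 2-designs. -/
theorem two_design_bernstein_parameters
    {d M : ℕ} (ψ : Fin M → (Fin d → ℂ))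
    (hunit : ∀ i, cinner (ψ i) (ψ i) = 1)
    (hdesign : ∀ X : Matrix (Fin d) (Fin d) ℂ,
      (1 / (M : ℂ)) • ∑ i, cinner (ψ i) (X.mulVec (ψ i)) • outer (ψ i) =
        (1 / ((d : ℂ) * ((d : ℂ) + 1))) • (X + X.trace • (1 : Matrix (Fin d) (Fin d) ℂ)))
    (ν : Fin M → Matrix (Fin d) (Fin d) ℂ)
    (hν : ∀ i, ν i = ((d : ℂ) * ((d : ℂ) + 1)) • outer (ψ i) -
      (d : ℂ) • (1 : Matrix (Fin d) (Fin d) ℂ))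
    (F : Matrix (Fin d) (Fin d) ℂ)
    (hF : F.PosSemidef ∧ (1 - F).PosSemidef) :
    (∀ i, specNorm (ν i) ≤ (d : ℝ) ^ 2) ∧
    (∑ i, (cinner (ψ i) (F.mulVec (ψ i)) / (M : ℂ)) • (ν i * ν i) =
      ((d : ℂ) * ((d : ℂ) - 1)) • F +
        ((d : ℂ) ^ 2 * F.trace) • (1 : Matrix (Fin d) (Fin d) ℂ)) ∧
    specNorm (∑ i, (cinner (ψ i) (F.mulVec (ψ i)) / (M : ℂ)) • (ν i * ν i) - F * F) ≤
      (d : ℝ) ^ 2 * ((d : ℝ) + 1) := by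
  refine ⟨fun i => ?_, IsTwoDesignFrame.sum_smul_sq_eq hdesign hunit hν F, ?_⟩
  · rw [hν i]
    exact (isStarProjection_outer (hunit i)).norm_smul_sub_smul_one_le d
  · have hbound := norm_smul_add_trace_smul_sub_mul_self_le hF.1 hF.2
    rw [Fintype.card_fin] at hbound
    rwa [IsTwoDesignFrame.sum_smul_sq_eq hdesign hunit hν F]
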